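/- Combined safety and liveness: if valid_state gs, the asset aid exists on the source chain, its current regulatory state there is s, reg_transition s action = Some s', the asset aid is not locked in gs, and the set of connected chains of aid is finite, then there exists gs' such that sync source action aid gs = Some gs' and valid_state gs' (i.e., sync necessarily succeeds and preserves global validity). -/
import Mathlib


inductive RegState | ACTIVE | FROZEN | SEIZED | CONFISCATED | RESTRICTED
deriving DecidableEq

inductive RegAction | FREEZE | SEIZE | CONFISCATE | RESTRICT | UNFREEZE | UNRESTRICT | RELEASE
deriving DecidableEq

open RegState RegAction

def regTransition : RegState → RegAction → Option RegState
  | ACTIVE, FREEZE => some FROZEN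
  | ACTIVE, SEIZE => some SEIZED
  | ACTIVE, CONFISCATE => some CONFISCATED
  | ACTIVE, RESTRICT => some RESTRICTED
  | FROZEN, SEIZE => some SEIZED
  | FROZEN, CONFISCATE => some CONFISCATED
  | FROZEN, UNFREEZE => some ACTIVE
  | SEIZED, CONFISCATE => some CONFISCATED
  | SEIZED, RELEASE => some ACTIVE
  | RESTRICTED, FREEZE => some FROZEN
  | RESTRICTED, CONFISCATE => some CONFISCATED
  | RESTRICTED, UNRESTRICT => some ACTIVE
  | _, _ => none

/-- Global state: per-chain asset regulatory states and per-asset locks. -/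
structure GlobalState (ChainId AssetId : Type) where
  chains : ChainId → AssetId → Option RegState
  locks : AssetId → Bool

variable {ChainId AssetId : Type}

def getRegState (gs : GlobalState ChainId AssetId) (c : ChainId) (aid : AssetId) :
    Option RegState := gs.chains c aid

def assetExists (gs : GlobalState ChainId AssetId) (c : ChainId) (aid : AssetId) : Prop :=
  gs.chains c aid ≠ none

def isLocked (gs : GlobalState ChainId AssetId) (aid : AssetId) : Prop :=
  gs.locks aid = true

def connectedChains (gs : GlobalState ChainId AssetId) (aid : AssetId) : Set ChainId :=
  {c | gs.chains c aid ≠ none}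

def acquireLock [DecidableEq AssetId] (gs : GlobalState ChainId AssetId) (aid : AssetId) :
    Option (GlobalState ChainId AssetId) :=
  if gs.locks aid then none
  else some { gs with locks := fun a => if a = aid then true else gs.locks a }

def releaseLock [DecidableEq AssetId] (gs : GlobalState ChainId AssetId) (aid : AssetId) :
    GlobalState ChainId AssetId :=
  { gs with locks := fun a => if a = aid then false else gs.locks a }

/-- Update the regulatory state of `aid` to `s'` on all connected chains. -/
def updateAllChains [DecidableEq AssetId] (gs : GlobalState ChainId AssetId)
    (aid : AssetId) (s' : RegState) : GlobalState ChainId AssetId :=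
  { gs with chains := fun c a =>
      if a = aid then (if (gs.chains c aid).isSome then some s' else gs.chains c a)
      else gs.chains c a }

/-- Check state, validate transition, acquire lock, update all connected chains,
release lock; `none` if any step fails. -/
def sync [DecidableEq AssetId] (source : ChainId) (action : RegAction) (aid : AssetId)
    (gs : GlobalState ChainId AssetId) : Option (GlobalState ChainId AssetId) :=
  match getRegState gs source aid with
  | none => none
  | some s =>
    match regTransition s action with
    | none => none
    | some s' =>
      match acquireLock gs aid with
      | none => none
      | some gs_locked => some (releaseLock (updateAllChains gs_locked aid s') aid)

/-- All chains holding the same asset agree on its regulatory state. -/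
def consistentState (gs : GlobalState ChainId AssetId) : Prop :=
  ∀ c1 c2 aid s1 s2, gs.chains c1 aid = some s1 → gs.chains c2 aid = some s2 → s1 = s2

/-- No asset is locked in quiescent states. -/
def noLockedWithoutReason (gs : GlobalState ChainId AssetId) : Prop :=
  ∀ aid, gs.locks aid = false

def validState (gs : GlobalState ChainId AssetId) : Prop :=
  consistentState gs ∧ noLockedWithoutReason gs

theorem combined_safety_liveness [DecidableEq AssetId]
    (gs : GlobalState ChainId AssetId)
    (source : ChainId) (action : RegAction) (aid : AssetId) (s s' : RegState)
    (hvalid : validState gs)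
    (hexists : assetExists gs source aid)
    (hcur : getRegState gs source aid = some s)
    (htrans : regTransition s action = some s')
    (hnot_locked : ¬ isLocked gs aid)
    (hfin : (connectedChains gs aid).Finite) :
    ∃ gs', sync source action aid gs = some gs' ∧ validState gs' := by
  have hlock : gs.locks aid = false := hvalid.2 aid
  refine ⟨releaseLock (updateAllChains { gs with locks := fun a => if a = aid then true else gs.locks a } aid s') aid, ?_, ?_, ?_⟩
  · simp [sync, hcur, htrans, acquireLock, hlock]
  · intro c1 c2 a s1 s2 h1 h2
    simp only [releaseLock, updateAllChains] at h1 h2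
    by_cases ha : a = aid
    · simp only [ha, if_pos rfl] at h1 h2
      by_cases hc1 : (gs.chains c1 aid).isSome <;>
      by_cases hc2 : (gs.chains c2 aid).isSome <;>
      simp [hc1, hc2] at h1 h2 <;>
      first
      | exact h1.symm.trans h2
      | exact hvalid.1 c1 c2 aid s1 s2 h1 h2
      | (exact absurd (Option.isSome_iff_exists.mpr ⟨s1, h1⟩) (by simpa using hc1))
      | (exact absurd (Option.isSome_iff_exists.mpr ⟨s2, h2⟩) (by simpa using hc2))
    · simp only [if_neg ha] at h1 h2
      exact hvalid.1 c1 c2 a s1 s2 h1 h2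
  · intro a
    by_cases h : a = aid <;> simp [releaseLock, updateAllChains, h, hvalid.2 a]
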